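/- arXiv:2411.19089 — 3 statements merged into one kernel-verified Lean document; each statement's English description precedes it below -/
import Mathlib

section
/- Let w(x,y) = (a - c·y, b + c·x) be a nonzero rigid motion in ℝ² and let w_⊥(x,y) := (-(b + c·x), a - c·y) be its pointwise 90° rotation. Suppose w does not vanish on the closure of an open bounded set Ω (e.g., if c ≠ 0, the center of rotation lies outside Ω̄). Define ẑ := w_⊥/‖w_⊥‖ on Ω. Then the space of rigid motions v satisfying v · ẑ = 0 on Ω equals span{w}. -/
/-!
The constraint `v_p · ẑ = 0` only sees the direction of `w_⊥`, and for the rigid motions with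
parameters `p` and `q = (a, b, c)` the product `v_p · (v_q)_⊥` is affine in `x`: its quadratic
terms cancel and its coefficients are the components of the cross product `q × p`. An affine
function vanishing on a nonempty open set is zero, and `q × p = 0` with `q ≠ 0` means
`p ∈ span {q}`.
-/

open Matrix

theorem ContinuousLinearMap.eq_zero_of_forall_mem_add_const_eq_zero
    {𝕜 E F : Type*} [NontriviallyNormedField 𝕜] [NormedAddCommGroup E] [NormedSpace 𝕜 E]
    [NormedAddCommGroup F] [NormedSpace 𝕜 F] {U : Set E} (hU : IsOpen U) (hne : U.Nonempty)
    (f : E →L[𝕜] F) (c : F) (h : ∀ x ∈ U, f x + c = 0) : f = 0 ∧ c = 0 := by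
  obtain ⟨x₀, hx₀⟩ := hne
  have hderiv : HasFDerivAt (fun x => f x + c) (0 : E →L[𝕜] F) x₀ :=
    (hasFDerivAt_const 0 x₀).congr_of_eventuallyEq
      (Filter.eventually_of_mem (hU.mem_nhds hx₀) h)
  have hf : f = 0 := (f.hasFDerivAt.add_const c).unique hderiv
  refine ⟨hf, ?_⟩
  simpa [hf] using h x₀ hx₀

theorem eq_zero_of_forall_mem_dotProduct_eq_zero {U : Set (Fin 2 → ℝ)} (hU : IsOpen U)
    (hne : U.Nonempty) {u : Fin 3 → ℝ} (h : ∀ x ∈ U, u ⬝ᵥ ![x 1, -x 0, 1] = 0) : u = 0 := by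
  set f : (Fin 2 → ℝ) →L[ℝ] ℝ :=
    u 0 • ContinuousLinearMap.proj 1 - u 1 • ContinuousLinearMap.proj 0
  obtain ⟨hf, hc⟩ := f.eq_zero_of_forall_mem_add_const_eq_zero hU hne (u 2) fun x hx => by
    have hx := h x hx
    simp only [dotProduct, Fin.sum_univ_three, cons_val_zero, cons_val_one, cons_val,
      mul_neg, mul_one] at hx
    simp only [_root_.sub_apply, _root_.smul_apply,
      ContinuousLinearMap.proj_apply, smul_eq_mul, f]
    linear_combination hx
  have h0 : u 0 = 0 := by simpa [f] using DFunLike.congr_fun hf (Pi.single 1 1)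
  have h1 : u 1 = 0 := by simpa [f] using DFunLike.congr_fun hf (Pi.single 0 1)
  ext i
  fin_cases i <;> simp [h0, h1, hc]

theorem cross_eq_zero_iff_exists_smul {K : Type*} [Field K] {v w : Fin 3 → K} (hv : v ≠ 0) :
    v ⨯₃ w = 0 ↔ ∃ t : K, w = t • v := by
  rw [← not_iff_not, ← ne_eq, crossProduct_ne_zero_iff_linearIndependent,
    LinearIndependent.pair_iff' hv]
  simp [eq_comm]

theorem sqrt_sq_add_sq_ne_zero {v : Fin 2 → ℝ} (hv : v ≠ 0) : √(v 0 ^ 2 + v 1 ^ 2) ≠ 0 := by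
  rw [Real.sqrt_ne_zero']
  contrapose! hv
  have h0 : v 0 = 0 := by nlinarith [sq_nonneg (v 0), sq_nonneg (v 1)]
  have h1 : v 1 = 0 := by nlinarith [sq_nonneg (v 0), sq_nonneg (v 1)]
  ext i
  fin_cases i
  exacts [h0, h1]

theorem rigidMotion_dot_perp_eq_cross_dotProduct {R : Type*} [CommRing R] (p q : Fin 3 → R)
    (x : Fin 2 → R) :
    (p 0 - p 2 * x 1) * -(q 1 + q 2 * x 0) + (p 1 + p 2 * x 0) * (q 0 - q 2 * x 1)
      = (q ⨯₃ p) ⬝ᵥ ![x 1, -x 0, 1] := by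
  simp only [dotProduct, cross_apply, Fin.sum_univ_three, cons_val_zero, cons_val_one, cons_val]
  ring

theorem stmt5_general (a b c : ℝ) (habc : ¬(a = 0 ∧ b = 0 ∧ c = 0))
    (Ω : Set (Fin 2 → ℝ)) (hΩ : IsOpen Ω) (hne : Ω.Nonempty)
    (w : (Fin 2 → ℝ) → Fin 2 → ℝ) (hw : ∀ x, w x = ![a - c * x 1, b + c * x 0])
    (wperp : (Fin 2 → ℝ) → Fin 2 → ℝ)
    (hwperp : ∀ x, wperp x = ![-(b + c * x 0), a - c * x 1])
    (hnz : ∀ x ∈ closure Ω, w x ≠ 0)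
    (zhat : (Fin 2 → ℝ) → Fin 2 → ℝ)
    (hzhat : ∀ x, zhat x =
      fun i => wperp x i / Real.sqrt ((wperp x 0) ^ 2 + (wperp x 1) ^ 2)) :
    {p : Fin 3 → ℝ | ∀ x ∈ Ω,
        (p 0 - p 2 * x 1) * zhat x 0 + (p 1 + p 2 * x 0) * zhat x 1 = 0}
      = {p : Fin 3 → ℝ | ∃ t : ℝ, p = t • ![a, b, c]} := by
  have hq : ![a, b, c] ≠ 0 := by simpa [funext_iff, Fin.forall_fin_succ] using habc
  have hwperp_ne : ∀ x ∈ Ω, wperp x ≠ 0 := by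
    intro x hx hx0
    apply hnz x (subset_closure hx)
    rw [hwperp] at hx0
    rw [hw]
    simp only [cons_eq_zero_iff, zero_empty, neg_eq_zero, and_true] at hx0 ⊢
    exact ⟨hx0.2, hx0.1⟩
  have hconstraint : ∀ p : Fin 3 → ℝ, ∀ x ∈ Ω,
      (p 0 - p 2 * x 1) * zhat x 0 + (p 1 + p 2 * x 0) * zhat x 1 = 0 ↔
        (![a, b, c] ⨯₃ p) ⬝ᵥ ![x 1, -x 0, 1] = 0 := by
    intro p x hx
    rw [hzhat, ← rigidMotion_dot_perp_eq_cross_dotProduct, ← mul_div_assoc, ← mul_div_assoc,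
      ← add_div, div_eq_zero_iff, or_iff_left (sqrt_sq_add_sq_ne_zero (hwperp_ne x hx)), hwperp]
    simp
  ext p
  rw [Set.mem_ofPred_eq, Set.mem_ofPred_eq, forall₂_congr (hconstraint p),
    ← cross_eq_zero_iff_exists_smul hq]
  exact ⟨eq_zero_of_forall_mem_dotProduct_eq_zero hΩ hne, fun h x _ => by simp [h]⟩

/-- Let w(x,y) = (a - c·y, b + c·x) be a nonzero rigid motion in ℝ² that does not vanish on
the closure of the open bounded set Ω, w_⊥ its pointwise 90° rotation and ẑ := w_⊥/‖w_⊥‖.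
Then the space of rigid motions v (parametrized by p ∈ ℝ³ via v_p(x) = (p₀ - p₂ y, p₁ + p₂ x))
satisfying v·ẑ = 0 on Ω equals span{w} (i.e. the parameters form span{(a,b,c)}). -/
theorem stmt5 (a b c : ℝ) (habc : ¬(a = 0 ∧ b = 0 ∧ c = 0))
    (Ω : Set (Fin 2 → ℝ)) (hΩ : IsOpen Ω) (hbd : Bornology.IsBounded Ω) (hne : Ω.Nonempty)
    (w : (Fin 2 → ℝ) → Fin 2 → ℝ) (hw : ∀ x, w x = ![a - c * x 1, b + c * x 0])
    (wperp : (Fin 2 → ℝ) → Fin 2 → ℝ)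
    (hwperp : ∀ x, wperp x = ![-(b + c * x 0), a - c * x 1])
    (hnz : ∀ x ∈ closure Ω, w x ≠ 0)
    (zhat : (Fin 2 → ℝ) → Fin 2 → ℝ)
    (hzhat : ∀ x, zhat x =
      fun i => wperp x i / Real.sqrt ((wperp x 0) ^ 2 + (wperp x 1) ^ 2)) :
    {p : Fin 3 → ℝ | ∀ x ∈ Ω,
        (p 0 - p 2 * x 1) * zhat x 0 + (p 1 + p 2 * x 0) * zhat x 1 = 0}
      = {p : Fin 3 → ℝ | ∃ t : ℝ, p = t • ![a, b, c]} :=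
  stmt5_general a b c habc Ω hΩ hne w hw wperp hwperp hnz zhat hzhat
end

section
/- Let p ∈ ℝ³ with ‖p‖ = 1 and let ẑ(x) := p be the constant unit vector field on an open set Ω ⊂ ℝ³ of positive measure. Let K_p denote the 3-dimensional space of rigid motions of the plane p_⊥ := {x : x·p = 0}, extended constantly in the normal direction: wᵉ(x) := w(P_{p_⊥} x), where P_{p_⊥} is the orthogonal projection onto p_⊥. Then every such extended field wᵉ is a rigid motion of ℝ³ satisfying wᵉ · ẑ = 0 on Ω, and the space of rigid motions v of ℝ³ with v · ẑ = 0 a.e. on Ω equals { wᵉ : w ∈ K_p } and has dimension exactly 3. -/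
open MeasureTheory Matrix

/-! A rigid motion of `ℝ³` is `x ↦ ω ⨯₃ x + b`. An affine function vanishing a.e. on an open
set of positive measure vanishes identically, so `v ⬝ᵥ p = 0` on `Ω` forces `b ⬝ᵥ p = 0` and
`(ω ⨯₃ x) ⬝ᵥ p = x ⬝ᵥ (p ⨯₃ ω) = 0` for all `x`, i.e. `ω ∥ p`. The fields `x ↦ b + c • p ⨯₃ x`
with `b ⬝ᵥ p = 0` are the injective image of the hyperplane `{(b, c) | b ⬝ᵥ p = 0}` of
`ℝ³ × ℝ`, hence form a 3-dimensional space. -/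

theorem AffineMap.eq_const_of_ae_eq_restrict {V P F : Type*} [NormedAddCommGroup V]
    [NormedSpace ℝ V] [FiniteDimensional ℝ V] [MetricSpace P] [NormedAddTorsor V P]
    [MeasurableSpace P] [NormedAddCommGroup F] [NormedSpace ℝ F]
    {μ : Measure P} [μ.IsOpenPosMeasure] (f : P →ᵃ[ℝ] F) {U : Set P} (hU : IsOpen U)
    (hμU : μ U ≠ 0) {c : F} (h : ∀ᵐ x ∂μ.restrict U, f x = c) :
    f = AffineMap.const ℝ P c := by
  have hf : Continuous f :=
    AffineMap.continuous_linear_iff.mp f.linear.continuous_of_finiteDimensional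
  exact AffineMap.ext_on (hU.affineSpan_eq_top (nonempty_of_measure_ne_zero hμU))
    (Measure.eqOn_open_of_ae_eq h hU hf.continuousOn continuousOn_const)

section CrossProduct

variable {R : Type*} [CommRing R]

def crossMatrix (ω : Fin 3 → R) : Matrix (Fin 3) (Fin 3) R :=
  !![0, -ω 2, ω 1; ω 2, 0, -ω 0; -ω 1, ω 0, 0]

theorem crossMatrix_transpose (ω : Fin 3 → R) : (crossMatrix ω)ᵀ = -crossMatrix ω := by
  ext i j
  fin_cases i <;> fin_cases j <;> simp [crossMatrix]

theorem crossMatrix_mulVec (ω x : Fin 3 → R) : crossMatrix ω *ᵥ x = ω ⨯₃ x := by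
  ext i
  fin_cases i <;> simp [crossMatrix, cross_apply, mulVec, vecHead, vecTail] <;> ring

theorem exists_eq_crossMatrix_of_transpose_eq_neg [NoZeroDivisors R] [CharZero R]
    {A : Matrix (Fin 3) (Fin 3) R} (hA : Aᵀ = -A) : ∃ ω, A = crossMatrix ω := by
  have h i j : A j i = -A i j := congrFun (congrFun hA i) j
  have hdiag i : A i i = 0 := self_eq_neg.mp (h i i)
  refine ⟨![A 2 1, A 0 2, A 1 0], ?_⟩
  ext i j
  fin_cases i <;> fin_cases j <;> simp [crossMatrix, hdiag, h 0 1, h 0 2, h 1 2]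

theorem eq_zero_of_forall_cross_eq_zero {u : Fin 3 → R} (h : ∀ x, u ⨯₃ x = 0) : u = 0 := by
  have h₀ := h ![1, 0, 0]
  have h₁ := h ![0, 1, 0]
  simp [cross_apply] at h₀ h₁
  ext i
  fin_cases i <;> simp [h₀, h₁]

theorem eq_dotProduct_smul_of_forall_cross_dotProduct_eq_zero {K : Type*} [Field K]
    [LinearOrder K] [IsStrictOrderedRing K] {ω p : Fin 3 → K} (hp : p ⬝ᵥ p = 1)
    (h : ∀ x, ω ⨯₃ x ⬝ᵥ p = 0) : ω = (ω ⬝ᵥ p) • p := by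
  have hpω : p ⨯₃ ω = 0 := by
    have := h (p ⨯₃ ω)
    rwa [dotProduct_comm, triple_product_permutation, triple_product_permutation,
      dotProduct_self_eq_zero] at this
  have := cross_cross_eq_smul_sub_smul' p ω p
  rwa [← cross_anticomm p ω, hpω, neg_zero, map_zero, hp, one_smul, eq_comm,
    sub_eq_zero] at this

theorem add_smul_cross_dotProduct_eq_zero {b p : Fin 3 → R} (hb : b ⬝ᵥ p = 0) (c : R)
    (x : Fin 3 → R) : (b + c • p ⨯₃ x) ⬝ᵥ p = 0 := by
  rw [add_dotProduct, hb, zero_add, smul_dotProduct, dotProduct_comm, dot_self_cross, smul_zero]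

end CrossProduct

section ScrewMotion

variable {R : Type*} [CommRing R]

def screwMotion (p : Fin 3 → R) : (Fin 3 → R) × R →ₗ[R] (Fin 3 → R) → Fin 3 → R :=
  LinearMap.pi fun x => LinearMap.fst R _ R + (LinearMap.snd R _ R).smulRight (p ⨯₃ x)

@[simp]
theorem screwMotion_apply (p : Fin 3 → R) (bc : (Fin 3 → R) × R) (x : Fin 3 → R) :
    screwMotion p bc x = bc.1 + bc.2 • p ⨯₃ x :=
  rfl

/-- The space `K_p` of the paper: rigid motions of the plane `p⊥` (translations `b ⊥ p` and
rotations `c • p ⨯₃ ·` about the axis `p`), extended constantly along `p`. -/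
def planarMotions (p : Fin 3 → R) : Submodule R ((Fin 3 → R) → Fin 3 → R) :=
  (LinearMap.ker (dotProductEquiv R (Fin 3) p ∘ₗ LinearMap.fst R _ R)).map (screwMotion p)

theorem coe_planarMotions (p : Fin 3 → R) :
    (planarMotions p : Set ((Fin 3 → R) → Fin 3 → R)) =
      {v | ∃ (b : Fin 3 → R) (c : R), b ⬝ᵥ p = 0 ∧ ∀ x, v x = b + c • p ⨯₃ x} := by
  ext v
  simp only [planarMotions, Submodule.map_coe, Set.mem_image, SetLike.mem_coe,
    LinearMap.mem_ker, LinearMap.comp_apply, LinearMap.fst_apply, dotProductEquiv_apply_apply,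
    Prod.exists, dotProduct_comm p]
  constructor
  · rintro ⟨b, c, hb, rfl⟩
    exact ⟨b, c, hb, fun x => rfl⟩
  · rintro ⟨b, c, hb, hv⟩
    exact ⟨b, c, hb, (funext hv).symm⟩

variable {K : Type*} [Field K]

theorem screwMotion_injective {p : Fin 3 → K} (hp : p ≠ 0) :
    Function.Injective (screwMotion p) := by
  rw [← LinearMap.ker_eq_bot, LinearMap.ker_eq_bot']
  rintro ⟨b, c⟩ h
  have hb : b = 0 := by simpa using congrFun h 0
  have hcp : c • p = 0 := eq_zero_of_forall_cross_eq_zero fun x => by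
    simpa [hb] using congrFun h x
  simp [hb, (smul_eq_zero.mp hcp).resolve_right hp]

theorem finrank_planarMotions {p : Fin 3 → K} (hp : p ≠ 0) :
    Module.finrank K (planarMotions p) = 3 := by
  have hφ : dotProductEquiv K (Fin 3) p ∘ₗ LinearMap.fst K _ K ≠ 0 := fun h =>
    hp <| (dotProductEquiv K (Fin 3)).map_eq_zero_iff.mp <|
      LinearMap.ext fun b => LinearMap.congr_fun h (b, 0)
  have := Module.Dual.finrank_ker_add_one_of_ne_zero hφ
  rw [Module.finrank_prod, Module.finrank_fin_fun, Module.finrank_self] at this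
  rw [planarMotions, ← (Submodule.equivMapOfInjective _ (screwMotion_injective hp) _).finrank_eq]
  omega

end ScrewMotion

theorem exists_screw_of_ae_dotProduct_eq_zero {p : Fin 3 → ℝ} (hp : p ⬝ᵥ p = 1)
    {Ω : Set (Fin 3 → ℝ)} (hΩ : IsOpen Ω) (hΩ₀ : volume Ω ≠ 0)
    {A : Matrix (Fin 3) (Fin 3) ℝ} (hA : Aᵀ = -A) {b : Fin 3 → ℝ}
    (h : ∀ᵐ x ∂volume.restrict Ω, (A *ᵥ x + b) ⬝ᵥ p = 0) :
    b ⬝ᵥ p = 0 ∧ ∃ c : ℝ, ∀ x, A *ᵥ x + b = b + c • p ⨯₃ x := by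
  obtain ⟨ω, rfl⟩ := exists_eq_crossMatrix_of_transpose_eq_neg hA
  let f : (Fin 3 → ℝ) →ᵃ[ℝ] ℝ :=
    (dotProductEquiv ℝ (Fin 3) p ∘ₗ (crossMatrix ω).mulVecLin).toAffineMap +
      AffineMap.const ℝ _ (b ⬝ᵥ p)
  have hf : ∀ x, f x = (crossMatrix ω *ᵥ x + b) ⬝ᵥ p := fun x => by
    simp [f, add_dotProduct, dotProduct_comm p]
  have hzero x : (crossMatrix ω *ᵥ x + b) ⬝ᵥ p = 0 := by
    rw [← hf, f.eq_const_of_ae_eq_restrict hΩ hΩ₀ (c := 0) (by simpa only [hf] using h)]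
    rfl
  have hb : b ⬝ᵥ p = 0 := by simpa using hzero 0
  have hω : ω = (ω ⬝ᵥ p) • p := eq_dotProduct_smul_of_forall_cross_dotProduct_eq_zero hp
    fun x => by simpa [add_dotProduct, hb, crossMatrix_mulVec] using hzero x
  refine ⟨hb, ω ⬝ᵥ p, fun x => ?_⟩
  rw [crossMatrix_mulVec, add_comm, ← LinearMap.smul_apply, ← map_smul, ← hω]

/-- For the constant unit vector field ẑ = p on an open Ω ⊂ ℝ³ of positive measure, the
space of rigid motions v of ℝ³ with v·p = 0 a.e. on Ω equals the space of rigid motions of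
the plane p_⊥ extended constantly in direction p (concretely the fields x ↦ b + c·(p × x)
with b·p = 0), and this space is 3-dimensional. -/
theorem stmt6 (p : Fin 3 → ℝ) (hp : (p 0) ^ 2 + (p 1) ^ 2 + (p 2) ^ 2 = 1)
    (Ω : Set (Fin 3 → ℝ)) (hΩ : IsOpen Ω) (hpos : 0 < volume Ω) :
    ({v : (Fin 3 → ℝ) → Fin 3 → ℝ |
        ∃ A : Matrix (Fin 3) (Fin 3) ℝ, ∃ bb : Fin 3 → ℝ, Aᵀ = -A ∧
          (∀ x, v x = A.mulVec x + bb) ∧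
          (∀ᵐ x ∂(volume.restrict Ω), (∑ i, v x i * p i) = 0)}
      = {v : (Fin 3 → ℝ) → Fin 3 → ℝ |
          ∃ bb : Fin 3 → ℝ, ∃ c : ℝ, (∑ i, bb i * p i) = 0 ∧
            ∀ x, v x = bb + c • ![p 1 * x 2 - p 2 * x 1,
                                  p 2 * x 0 - p 0 * x 2,
                                  p 0 * x 1 - p 1 * x 0]}) ∧
    ∃ K : Submodule ℝ ((Fin 3 → ℝ) → Fin 3 → ℝ),
      (↑K : Set ((Fin 3 → ℝ) → Fin 3 → ℝ)) =
        {v | ∃ bb : Fin 3 → ℝ, ∃ c : ℝ, (∑ i, bb i * p i) = 0 ∧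
          ∀ x, v x = bb + c • ![p 1 * x 2 - p 2 * x 1,
                                p 2 * x 0 - p 0 * x 2,
                                p 0 * x 1 - p 1 * x 0]} ∧
      Module.finrank ℝ K = 3 := by
  have hpp : p ⬝ᵥ p = 1 := by simpa [dotProduct, Fin.sum_univ_three, sq] using hp
  have hp₀ : p ≠ 0 := by rintro rfl; simp at hpp
  refine ⟨Set.ext fun v => ⟨?_, ?_⟩, planarMotions p, coe_planarMotions p,
    finrank_planarMotions hp₀⟩
  · rintro ⟨A, b, hA, hv, hae⟩
    obtain ⟨hb, c, hc⟩ := exists_screw_of_ae_dotProduct_eq_zero hpp hΩ hpos.ne' hA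
      (hae.mono fun x hx => by rwa [hv] at hx)
    exact ⟨b, c, hb, fun x => (hv x).trans (hc x)⟩
  · rintro ⟨b, c, hb, hv⟩
    refine ⟨crossMatrix (c • p), b, crossMatrix_transpose _, fun x => ?_,
      ae_of_all _ fun x => ?_⟩
    · rw [hv, crossMatrix_mulVec, map_smul, LinearMap.smul_apply]
      exact add_comm _ _
    · rw [hv]
      exact add_smul_cross_dotProduct_eq_zero hb c x
end

section
/- Let V be a Hilbert space with seminorm ‖·‖_a induced by a bounded symmetric positive semidefinite bilinear form a, and let W ⊂ V be a subspace on which a(v,v) ≥ γ‖v‖² holds (γ > 0). Suppose W_h ⊂ V is a subspace such that for every v_h ∈ W_h there is v ∈ W with ‖v_h − v‖ ≤ δ‖v_h‖. Then a(v_h, v_h)^{1/2} ≥ (γ^{1/2}(1 − δ) − Cδ)‖v_h‖ for all v_h ∈ W_h, where C bounds ‖w‖_a ≤ C‖w‖; in particular, for δ small enough, a is uniformly elliptic on W_h. -/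
/-- Cauchy–Schwarz for a positive semidefinite symmetric bilinear form. -/
lemma stmt19_cs {V : Type*} [AddCommGroup V] [Module ℝ V]
    (a : V →ₗ[ℝ] V →ₗ[ℝ] ℝ)
    (hsymm : ∀ u v, a u v = a v u) (hpsd : ∀ v, 0 ≤ a v v)
    (u v : V) : (a u v) ^ 2 ≤ a u u * a v v := by
  have h : ∀ x : ℝ, 0 ≤ a v v * (x * x) + (2 * a u v) * x + a u u := by
    intro x
    have := hpsd (u + x • v)
    simp only [map_add, map_smul, LinearMap.add_apply, LinearMap.smul_apply,
      smul_eq_mul] at this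
    rw [hsymm v u] at this
    nlinarith
  have := discrim_le_zero h
  unfold discrim at this
  nlinarith
/-- Triangle inequality for the seminorm induced by a psd symmetric form. -/
lemma stmt19_tri {V : Type*} [AddCommGroup V] [Module ℝ V]
    (a : V →ₗ[ℝ] V →ₗ[ℝ] ℝ)
    (hsymm : ∀ u v, a u v = a v u) (hpsd : ∀ v, 0 ≤ a v v)
    (u v : V) :
    Real.sqrt (a (u + v) (u + v)) ≤ Real.sqrt (a u u) + Real.sqrt (a v v) := by
  have hcs : a u v ≤ Real.sqrt (a u u) * Real.sqrt (a v v) := by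
    have h1 : a u v ≤ |a u v| := le_abs_self _
    have h2 : |a u v| = Real.sqrt ((a u v) ^ 2) := by
      rw [Real.sqrt_sq_eq_abs]
    have h3 : Real.sqrt ((a u v) ^ 2) ≤ Real.sqrt (a u u * a v v) :=
      Real.sqrt_le_sqrt (stmt19_cs a hsymm hpsd u v)
    rw [Real.sqrt_mul (hpsd u)] at h3
    linarith
  have hexp : a (u + v) (u + v) = a u u + 2 * a u v + a v v := by
    simp only [map_add, LinearMap.add_apply]
    rw [hsymm v u]; ring
  have hle : a (u + v) (u + v) ≤ (Real.sqrt (a u u) + Real.sqrt (a v v)) ^ 2 := by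
    rw [hexp]
    have hu := Real.sq_sqrt (hpsd u)
    have hv := Real.sq_sqrt (hpsd v)
    nlinarith
  calc Real.sqrt (a (u + v) (u + v))
      ≤ Real.sqrt ((Real.sqrt (a u u) + Real.sqrt (a v v)) ^ 2) :=
        Real.sqrt_le_sqrt hle
    _ = Real.sqrt (a u u) + Real.sqrt (a v v) := by
        rw [Real.sqrt_sq (by positivity)]

/-- Abstract discrete ellipticity: if a is a bounded symmetric positive semidefinite form
with ‖·‖_a ≤ C‖·‖, elliptic with constant γ on a subspace W, and every v_h in the
subspace W_h admits v ∈ W with ‖v_h − v‖ ≤ δ‖v_h‖, then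
a(v_h,v_h)^{1/2} ≥ (γ^{1/2}(1−δ) − Cδ)‖v_h‖ for all v_h ∈ W_h; in particular for δ small
enough a is uniformly elliptic on W_h. -/
theorem stmt19 {V : Type*} [NormedAddCommGroup V] [InnerProductSpace ℝ V]
    (a : V →ₗ[ℝ] V →ₗ[ℝ] ℝ)
    (hsymm : ∀ u v, a u v = a v u) (hpsd : ∀ v, 0 ≤ a v v)
    (C : ℝ) (hC : 0 ≤ C) (hbound : ∀ w, Real.sqrt (a w w) ≤ C * ‖w‖)
    (W : Submodule ℝ V) (γ : ℝ) (hγ : 0 < γ)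
    (hell : ∀ v ∈ W, γ * ‖v‖ ^ 2 ≤ a v v)
    (Wh : Submodule ℝ V) (δ : ℝ) (hδ : 0 ≤ δ)
    (happrox : ∀ vh ∈ Wh, ∃ v ∈ W, ‖vh - v‖ ≤ δ * ‖vh‖) :
    (∀ vh ∈ Wh, (Real.sqrt γ * (1 - δ) - C * δ) * ‖vh‖ ≤ Real.sqrt (a vh vh)) ∧
    (0 < Real.sqrt γ * (1 - δ) - C * δ →
      ∃ γ' : ℝ, 0 < γ' ∧ ∀ vh ∈ Wh, γ' * ‖vh‖ ^ 2 ≤ a vh vh) := by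
  have main : ∀ vh ∈ Wh, (Real.sqrt γ * (1 - δ) - C * δ) * ‖vh‖ ≤ Real.sqrt (a vh vh) := by
    intro vh hvh
    obtain ⟨v, hvW, hdist⟩ := happrox vh hvh
    -- triangle: v = vh + (v - vh)
    have htri : Real.sqrt (a v v) ≤ Real.sqrt (a vh vh) + Real.sqrt (a (v - vh) (v - vh)) := by
      have := stmt19_tri a hsymm hpsd vh (v - vh)
      simpa using this
    have hvv : Real.sqrt (a (v - vh) (v - vh)) ≤ C * (δ * ‖vh‖) := by
      calc Real.sqrt (a (v - vh) (v - vh)) ≤ C * ‖v - vh‖ := hbound _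
        _ ≤ C * (δ * ‖vh‖) := by
            rw [norm_sub_rev]
            exact mul_le_mul_of_nonneg_left hdist hC
    -- ellipticity on W
    have hellv : Real.sqrt γ * ‖v‖ ≤ Real.sqrt (a v v) := by
      have h1 : Real.sqrt (γ * ‖v‖ ^ 2) ≤ Real.sqrt (a v v) :=
        Real.sqrt_le_sqrt (hell v hvW)
      rwa [Real.sqrt_mul hγ.le, Real.sqrt_sq (norm_nonneg _)] at h1
    have hnorm : (1 - δ) * ‖vh‖ ≤ ‖v‖ := by
      have := norm_sub_norm_le vh v
      linarith [hdist]
    have hsg : 0 ≤ Real.sqrt γ := Real.sqrt_nonneg _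
    have h2 : Real.sqrt γ * ((1 - δ) * ‖vh‖) ≤ Real.sqrt γ * ‖v‖ :=
      mul_le_mul_of_nonneg_left hnorm hsg
    nlinarith
  refine ⟨main, fun hpos => ?_⟩
  refine ⟨(Real.sqrt γ * (1 - δ) - C * δ) ^ 2, by positivity, fun vh hvh => ?_⟩
  have h1 := main vh hvh
  have h2 : ((Real.sqrt γ * (1 - δ) - C * δ) * ‖vh‖) ^ 2 ≤ Real.sqrt (a vh vh) ^ 2 := by
    apply pow_le_pow_left₀ (by positivity) h1
  rw [Real.sq_sqrt (hpsd vh)] at h2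
  calc (Real.sqrt γ * (1 - δ) - C * δ) ^ 2 * ‖vh‖ ^ 2
      = ((Real.sqrt γ * (1 - δ) - C * δ) * ‖vh‖) ^ 2 := by ring
    _ ≤ a vh vh := h2
end
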